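/- arXiv:1011.4103 — 2 statements merged into one kernel-verified Lean document; each statement's English description precedes it below -/
import Mathlib

section
/- For every polynomial D in Z[x_1,...,x_p] there exist n ≥ p and a finite system T of equations of the forms x_i = 1, x_i + x_j = x_k, x_i · x_j = x_k with i, j, k in {1,...,n}, such that for all natural numbers x_1,...,x_p: D(x_1,...,x_p) = 0 if and only if there exist natural numbers x_{p+1},...,x_n making (x_1,...,x_n) a solution of T; moreover, when D(x_1,...,x_p) = 0, the extension (x_{p+1},...,x_n) is unique. -/
/-- An equation from the set `E_n`: `x_i = 1`, `x_i + x_j = x_k`, or `x_i * x_j = x_k`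
with indices in `{1, ..., n}` (here `Fin n`). -/
inductive Eqn (n : ℕ) where
  | one (i : Fin n)
  | add (i j k : Fin n)
  | mul (i j k : Fin n)

/-- The equation holds for an assignment `x` of values in a commutative semiring. -/
def Eqn.Holds {n : ℕ} {K : Type*} [CommSemiring K] (x : Fin n → K) : Eqn n → Prop
  | .one i => x i = 1
  | .add i j k => x i + x j = x k
  | .mul i j k => x i * x j = x k

/-- Equations with plain `ℕ` indices. -/
inductive NE where
  | one (i : ℕ)
  | add (i j k : ℕ)
  | mul (i j k : ℕ)

def NE.Holds (y : ℕ → ℕ) : NE → Prop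
  | .one i => y i = 1
  | .add i j k => y i + y j = y k
  | .mul i j k => y i * y j = y k

def NE.vars : NE → List ℕ
  | .one i => [i]
  | .add i j k => [i, j, k]
  | .mul i j k => [i, j, k]

lemma NE.holds_congr {y z : ℕ → ℕ} {e : NE} (h : ∀ i ∈ e.vars, y i = z i)
    (hy : e.Holds y) : e.Holds z := by
  cases e <;> simp [NE.Holds, NE.vars] at * <;>
    first
      | omega
      | (obtain ⟨h1, h2, h3⟩ := h; rw [← h1, ← h2, ← h3]; exact hy)

/-- Terms over `p` variables. -/
inductive Term (p : ℕ) where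
  | zero
  | one
  | var (i : Fin p)
  | add (a b : Term p)
  | mul (a b : Term p)

def Term.ev {p : ℕ} (y : ℕ → ℕ) : Term p → ℕ
  | .zero => 0
  | .one => 1
  | .var i => y i
  | .add a b => a.ev y + b.ev y
  | .mul a b => a.ev y * b.ev y

lemma Term.ev_congr {p : ℕ} {y z : ℕ → ℕ} (h : ∀ i < p, y i = z i) :
    ∀ t : Term p, t.ev y = t.ev z
  | .zero => rfl
  | .one => rfl
  | .var i => h i i.isLt
  | .add a b => by rw [Term.ev, Term.ev, ev_congr h a, ev_congr h b]
  | .mul a b => by rw [Term.ev, Term.ev, ev_congr h a, ev_congr h b]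

/-- Compile a term starting at fresh index `s`: returns (new fresh index, equations, result index). -/
def comp {p : ℕ} : Term p → ℕ → ℕ × List NE × ℕ
  | .zero, s => (s + 1, [.add s s s], s)
  | .one, s => (s + 1, [.one s], s)
  | .var i, s => (s, [], (i : ℕ))
  | .add a b, s =>
      ((comp b (comp a s).1).1 + 1,
        .add (comp a s).2.2 (comp b (comp a s).1).2.2 (comp b (comp a s).1).1 ::
          ((comp a s).2.1 ++ (comp b (comp a s).1).2.1),
        (comp b (comp a s).1).1)
  | .mul a b, s =>
      ((comp b (comp a s).1).1 + 1,
        .mul (comp a s).2.2 (comp b (comp a s).1).2.2 (comp b (comp a s).1).1 ::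
          ((comp a s).2.1 ++ (comp b (comp a s).1).2.1),
        (comp b (comp a s).1).1)

lemma comp_le {p : ℕ} (t : Term p) : ∀ s, s ≤ (comp t s).1 := by
  induction t with
  | zero => intro s; simp [comp]
  | one => intro s; simp [comp]
  | var i => intro s; simp [comp]
  | add a b iha ihb =>
      intro s
      have h1 := iha s
      have h2 := ihb (comp a s).1
      simp only [comp]; omega
  | mul a b iha ihb =>
      intro s
      have h1 := iha s
      have h2 := ihb (comp a s).1
      simp only [comp]; omega

lemma comp_good {p : ℕ} (t : Term p) : ∀ s, p ≤ s →
    (∀ e ∈ (comp t s).2.1, ∀ i ∈ e.vars, i < p ∨ (s ≤ i ∧ i < (comp t s).1)) ∧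
    ((comp t s).2.2 < p ∨ (s ≤ (comp t s).2.2 ∧ (comp t s).2.2 < (comp t s).1)) := by
  induction t with
  | zero => intro s hs; constructor
            · intro e he i hi; simp [comp] at he; subst he; simp [NE.vars] at hi; simp [comp]; omega
            · simp [comp]
  | one => intro s hs; constructor
           · intro e he i hi; simp [comp] at he; subst he; simp [NE.vars] at hi; simp [comp]; omega
           · simp [comp]
  | var i => intro s hs; constructor
             · intro e he; simp [comp] at he
             · exact Or.inl i.isLt
  | add a b iha ihb =>
      intro s hs
      have hle1 := comp_le a s
      have hle2 := comp_le b (comp a s).1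
      obtain ⟨ha1, ha2⟩ := iha s hs
      obtain ⟨hb1, hb2⟩ := ihb (comp a s).1 (hs.trans hle1)
      constructor
      · intro e he i hi
        simp only [comp, List.mem_cons, List.mem_append] at he
        rcases he with rfl | he | he
        · simp [NE.vars] at hi
          simp only [comp]
          rcases hi with rfl | rfl | rfl
          · rcases ha2 with h | h; · exact Or.inl h
            · right; omega
          · rcases hb2 with h | h; · exact Or.inl h
            · right; omega
          · right; omega
        · have := ha1 e he i hi; simp only [comp]; omega
        · have := hb1 e he i hi; simp only [comp]; omega
      · simp only [comp]; omega
  | mul a b iha ihb =>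
      intro s hs
      have hle1 := comp_le a s
      have hle2 := comp_le b (comp a s).1
      obtain ⟨ha1, ha2⟩ := iha s hs
      obtain ⟨hb1, hb2⟩ := ihb (comp a s).1 (hs.trans hle1)
      constructor
      · intro e he i hi
        simp only [comp, List.mem_cons, List.mem_append] at he
        rcases he with rfl | he | he
        · simp [NE.vars] at hi
          simp only [comp]
          rcases hi with rfl | rfl | rfl
          · rcases ha2 with h | h; · exact Or.inl h
            · right; omega
          · rcases hb2 with h | h; · exact Or.inl h
            · right; omega
          · right; omega
        · have := ha1 e he i hi; simp only [comp]; omega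
        · have := hb1 e he i hi; simp only [comp]; omega
      · simp only [comp]; omega

lemma comp_ex {p : ℕ} (t : Term p) : ∀ s, p ≤ s → ∀ y : ℕ → ℕ,
    ∃ y' : ℕ → ℕ, (∀ i, (i < s ∨ (comp t s).1 ≤ i) → y' i = y i) ∧
      (∀ e ∈ (comp t s).2.1, e.Holds y') ∧ y' (comp t s).2.2 = t.ev y := by
  induction t with
  | zero =>
      intro s hs y
      refine ⟨Function.update y s 0, ?_, ?_, ?_⟩
      · intro i hi; apply Function.update_of_ne; simp [comp] at hi; omega
      · intro e he; simp [comp] at he; subst he; simp [NE.Holds]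
      · simp [comp, Term.ev]
  | one =>
      intro s hs y
      refine ⟨Function.update y s 1, ?_, ?_, ?_⟩
      · intro i hi; apply Function.update_of_ne; simp [comp] at hi; omega
      · intro e he; simp [comp] at he; subst he; simp [NE.Holds]
      · simp [comp, Term.ev]
  | var i =>
      intro s hs y
      exact ⟨y, fun _ _ => rfl, by intro e he; simp [comp] at he, rfl⟩
  | add a b iha ihb =>
      intro s hs y
      have hle1 := comp_le a s
      have hle2 := comp_le b (comp a s).1
      obtain ⟨ga1, ga2⟩ := comp_good a s hs
      obtain ⟨gb1, gb2⟩ := comp_good b (comp a s).1 (hs.trans hle1)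
      obtain ⟨y1, hy1a, hy1h, hy1v⟩ := iha s hs y
      obtain ⟨y2, hy2a, hy2h, hy2v⟩ := ihb (comp a s).1 (hs.trans hle1) y1
      refine ⟨Function.update y2 (comp b (comp a s).1).1
        (y2 (comp a s).2.2 + y2 (comp b (comp a s).1).2.2), ?_, ?_, ?_⟩
      · intro i hi
        simp only [comp] at hi
        rw [Function.update_of_ne (by omega), hy2a i (by omega), hy1a i (by omega)]
      · intro e he
        simp only [comp, List.mem_cons, List.mem_append] at he
        rcases he with rfl | he | he
        · simp only [NE.Holds, Function.update_self]
          rw [Function.update_of_ne (by rcases ga2 with h | h <;> omega),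
              Function.update_of_ne (by rcases gb2 with h | h <;> omega)]
        · refine NE.holds_congr (fun v hv => ?_) (hy1h e he)
          have := ga1 e he v hv
          rw [Function.update_of_ne (by omega), hy2a v (by omega)]
        · refine NE.holds_congr (fun v hv => ?_) (hy2h e he)
          have := gb1 e he v hv
          rw [Function.update_of_ne (by omega)]
      · simp only [comp, Function.update_self, Term.ev]
        rw [hy2a (comp a s).2.2 (by rcases ga2 with h | h <;> omega), hy1v, hy2v,
            Term.ev_congr (fun i hi => hy1a i (by omega)) b]
  | mul a b iha ihb =>
      intro s hs y
      have hle1 := comp_le a s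
      have hle2 := comp_le b (comp a s).1
      obtain ⟨ga1, ga2⟩ := comp_good a s hs
      obtain ⟨gb1, gb2⟩ := comp_good b (comp a s).1 (hs.trans hle1)
      obtain ⟨y1, hy1a, hy1h, hy1v⟩ := iha s hs y
      obtain ⟨y2, hy2a, hy2h, hy2v⟩ := ihb (comp a s).1 (hs.trans hle1) y1
      refine ⟨Function.update y2 (comp b (comp a s).1).1
        (y2 (comp a s).2.2 * y2 (comp b (comp a s).1).2.2), ?_, ?_, ?_⟩
      · intro i hi
        simp only [comp] at hi
        rw [Function.update_of_ne (by omega), hy2a i (by omega), hy1a i (by omega)]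
      · intro e he
        simp only [comp, List.mem_cons, List.mem_append] at he
        rcases he with rfl | he | he
        · simp only [NE.Holds, Function.update_self]
          rw [Function.update_of_ne (by rcases ga2 with h | h <;> omega),
              Function.update_of_ne (by rcases gb2 with h | h <;> omega)]
        · refine NE.holds_congr (fun v hv => ?_) (hy1h e he)
          have := ga1 e he v hv
          rw [Function.update_of_ne (by omega), hy2a v (by omega)]
        · refine NE.holds_congr (fun v hv => ?_) (hy2h e he)
          have := gb1 e he v hv
          rw [Function.update_of_ne (by omega)]
      · simp only [comp, Function.update_self, Term.ev]
        rw [hy2a (comp a s).2.2 (by rcases ga2 with h | h <;> omega), hy1v, hy2v,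
            Term.ev_congr (fun i hi => hy1a i (by omega)) b]

lemma comp_uniq {p : ℕ} (t : Term p) : ∀ s, p ≤ s → ∀ y z : ℕ → ℕ,
    (∀ i < s, y i = z i) →
    (∀ e ∈ (comp t s).2.1, e.Holds y) → (∀ e ∈ (comp t s).2.1, e.Holds z) →
    ∀ i < (comp t s).1, y i = z i := by
  induction t with
  | zero =>
      intro s hs y z hyz hy hz i hi
      simp only [comp] at hi
      rcases Nat.lt_or_ge i s with h | h
      · exact hyz i h
      · have h1 := hy (NE.add s s s) (by simp [comp])
        have h2 := hz (NE.add s s s) (by simp [comp])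
        simp only [NE.Holds] at h1 h2
        have h3 : i = s := by omega
        rw [h3]; omega
  | one =>
      intro s hs y z hyz hy hz i hi
      simp only [comp] at hi
      rcases Nat.lt_or_ge i s with h | h
      · exact hyz i h
      · have h1 := hy (NE.one s) (by simp [comp])
        have h2 := hz (NE.one s) (by simp [comp])
        simp only [NE.Holds] at h1 h2
        have h3 : i = s := by omega
        rw [h3, h1, h2]
  | var j =>
      intro s hs y z hyz hy hz i hi
      exact hyz i hi
  | add a b iha ihb =>
      intro s hs y z hyz hy hz i hi
      have hle1 := comp_le a s
      have hle2 := comp_le b (comp a s).1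
      obtain ⟨ga1, ga2⟩ := comp_good a s hs
      obtain ⟨gb1, gb2⟩ := comp_good b (comp a s).1 (hs.trans hle1)
      have mem1 : ∀ e ∈ (comp a s).2.1, e ∈ (comp (Term.add a b) s).2.1 := by
        intro e he; simp only [comp, List.mem_cons, List.mem_append]; tauto
      have mem2 : ∀ e ∈ (comp b (comp a s).1).2.1, e ∈ (comp (Term.add a b) s).2.1 := by
        intro e he; simp only [comp, List.mem_cons, List.mem_append]; tauto
      have h1 : ∀ i < (comp a s).1, y i = z i :=
        iha s hs y z hyz (fun e he => hy e (mem1 e he)) (fun e he => hz e (mem1 e he))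
      have h2 : ∀ i < (comp b (comp a s).1).1, y i = z i :=
        ihb (comp a s).1 (hs.trans hle1) y z (fun i hi => h1 i hi)
          (fun e he => hy e (mem2 e he)) (fun e he => hz e (mem2 e he))
      simp only [comp] at hi
      rcases Nat.lt_or_ge i (comp b (comp a s).1).1 with h | h
      · exact h2 i h
      · have hi' : i = (comp b (comp a s).1).1 := by omega
        subst hi'
        have e1 := hy (NE.add (comp a s).2.2 (comp b (comp a s).1).2.2 (comp b (comp a s).1).1)
          (by simp [comp])
        have e2 := hz (NE.add (comp a s).2.2 (comp b (comp a s).1).2.2 (comp b (comp a s).1).1)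
          (by simp [comp])
        simp only [NE.Holds] at e1 e2
        rw [h1 _ (by rcases ga2 with h | h <;> omega),
            h2 _ (by rcases gb2 with h | h <;> omega)] at e1
        omega
  | mul a b iha ihb =>
      intro s hs y z hyz hy hz i hi
      have hle1 := comp_le a s
      have hle2 := comp_le b (comp a s).1
      obtain ⟨ga1, ga2⟩ := comp_good a s hs
      obtain ⟨gb1, gb2⟩ := comp_good b (comp a s).1 (hs.trans hle1)
      have mem1 : ∀ e ∈ (comp a s).2.1, e ∈ (comp (Term.mul a b) s).2.1 := by
        intro e he; simp only [comp, List.mem_cons, List.mem_append]; tauto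
      have mem2 : ∀ e ∈ (comp b (comp a s).1).2.1, e ∈ (comp (Term.mul a b) s).2.1 := by
        intro e he; simp only [comp, List.mem_cons, List.mem_append]; tauto
      have h1 : ∀ i < (comp a s).1, y i = z i :=
        iha s hs y z hyz (fun e he => hy e (mem1 e he)) (fun e he => hz e (mem1 e he))
      have h2 : ∀ i < (comp b (comp a s).1).1, y i = z i :=
        ihb (comp a s).1 (hs.trans hle1) y z (fun i hi => h1 i hi)
          (fun e he => hy e (mem2 e he)) (fun e he => hz e (mem2 e he))
      simp only [comp] at hi
      rcases Nat.lt_or_ge i (comp b (comp a s).1).1 with h | h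
      · exact h2 i h
      · have hi' : i = (comp b (comp a s).1).1 := by omega
        subst hi'
        have e1 := hy (NE.mul (comp a s).2.2 (comp b (comp a s).1).2.2 (comp b (comp a s).1).1)
          (by simp [comp])
        have e2 := hz (NE.mul (comp a s).2.2 (comp b (comp a s).1).2.2 (comp b (comp a s).1).1)
          (by simp [comp])
        simp only [NE.Holds] at e1 e2
        rw [h1 _ (by rcases ga2 with h | h <;> omega),
            h2 _ (by rcases gb2 with h | h <;> omega)] at e1
        rw [← e1, ← e2]

def NE.toEqn? (n : ℕ) : NE → Option (Eqn n)
  | .one i => if h : i < n then some (.one ⟨i, h⟩) else none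
  | .add i j k =>
      if h : i < n ∧ j < n ∧ k < n then some (.add ⟨i, h.1⟩ ⟨j, h.2.1⟩ ⟨k, h.2.2⟩) else none
  | .mul i j k =>
      if h : i < n ∧ j < n ∧ k < n then some (.mul ⟨i, h.1⟩ ⟨j, h.2.1⟩ ⟨k, h.2.2⟩) else none

lemma toEqn?_spec {n : ℕ} {e : NE} (hb : ∀ i ∈ e.vars, i < n) (y : Fin n → ℕ)
    (Y : ℕ → ℕ) (hY : ∀ i (h : i < n), Y i = y ⟨i, h⟩) :
    ∃ e', e.toEqn? n = some e' ∧ (Eqn.Holds y e' ↔ NE.Holds Y e) := by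
  cases e with
  | one i =>
      simp only [NE.vars, List.mem_singleton, forall_eq] at hb
      exact ⟨Eqn.one ⟨i, hb⟩, by simp [NE.toEqn?, hb],
        by simp [Eqn.Holds, NE.Holds, hY i hb]⟩
  | add i j k =>
      have hi : i < n := hb i (by simp [NE.vars])
      have hj : j < n := hb j (by simp [NE.vars])
      have hk : k < n := hb k (by simp [NE.vars])
      exact ⟨Eqn.add ⟨i, hi⟩ ⟨j, hj⟩ ⟨k, hk⟩, by simp [NE.toEqn?, hi, hj, hk],
        by simp [Eqn.Holds, NE.Holds, hY i hi, hY j hj, hY k hk]⟩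
  | mul i j k =>
      have hi : i < n := hb i (by simp [NE.vars])
      have hj : j < n := hb j (by simp [NE.vars])
      have hk : k < n := hb k (by simp [NE.vars])
      exact ⟨Eqn.mul ⟨i, hi⟩ ⟨j, hj⟩ ⟨k, hk⟩, by simp [NE.toEqn?, hi, hj, hk],
        by simp [Eqn.Holds, NE.Holds, hY i hi, hY j hj, hY k hk]⟩

lemma filterMap_toEqn? {n : ℕ} {E : List NE} (hb : ∀ e ∈ E, ∀ i ∈ e.vars, i < n)
    (y : Fin n → ℕ) (Y : ℕ → ℕ) (hY : ∀ i (h : i < n), Y i = y ⟨i, h⟩) :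
    (∀ e' ∈ E.filterMap (NE.toEqn? n), Eqn.Holds y e') ↔ (∀ e ∈ E, NE.Holds Y e) := by
  constructor
  · intro h e he
    obtain ⟨e', hsome, hiff⟩ := toEqn?_spec (hb e he) y Y hY
    exact hiff.mp (h e' (List.mem_filterMap.2 ⟨e, he, hsome⟩))
  · intro h e' he'
    obtain ⟨e, he, hsome⟩ := List.mem_filterMap.1 he'
    obtain ⟨e'', hsome', hiff⟩ := toEqn?_spec (hb e he) y Y hY
    rw [hsome] at hsome'
    cases hsome'
    exact hiff.mpr (h e he)

def natTerm (p : ℕ) : ℕ → Term p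
  | 0 => .zero
  | n + 1 => .add .one (natTerm p n)

lemma natTerm_ev (p : ℕ) (y : ℕ → ℕ) : ∀ n, (natTerm p n).ev y = n
  | 0 => rfl
  | n + 1 => by rw [natTerm, Term.ev, Term.ev, natTerm_ev p y n]; omega

lemma exists_AB {p : ℕ} (D : MvPolynomial (Fin p) ℤ) :
    ∃ A B : Term p, ∀ y : ℕ → ℕ,
      MvPolynomial.aeval (fun i : Fin p => ((y i : ℕ) : ℤ)) D
        = (A.ev y : ℤ) - (B.ev y : ℤ) := by
  induction D using MvPolynomial.induction_on with
  | C a =>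
      rcases le_or_gt 0 a with h | h
      · refine ⟨natTerm p a.toNat, .zero, fun y => ?_⟩
        simp [natTerm_ev, Term.ev]
        omega
      · refine ⟨.zero, natTerm p (-a).toNat, fun y => ?_⟩
        simp [natTerm_ev, Term.ev]
        omega
  | add q r hq hr =>
      obtain ⟨A1, B1, h1⟩ := hq
      obtain ⟨A2, B2, h2⟩ := hr
      refine ⟨.add A1 A2, .add B1 B2, fun y => ?_⟩
      simp only [map_add, h1 y, h2 y, Term.ev]
      push_cast
      ring
  | mul_X q i hq =>
      obtain ⟨A, B, h⟩ := hq
      refine ⟨.mul A (.var i), .mul B (.var i), fun y => ?_⟩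
      simp only [map_mul, h y, Term.ev, MvPolynomial.aeval_X]
      push_cast
      ring

lemma main_aux {p : ℕ} (A B : Term p) :
    ∃ (n : ℕ) (hpn : p ≤ n) (T : List (Eqn n)),
      ∀ x : Fin p → ℕ,
        ((A.ev (fun i => if h : i < p then x ⟨i, h⟩ else 0)
            = B.ev (fun i => if h : i < p then x ⟨i, h⟩ else 0)) ↔
          ∃ y : Fin n → ℕ, (∀ i : Fin p, y (Fin.castLE hpn i) = x i) ∧
            ∀ e ∈ T, e.Holds y) ∧
        (∀ y z : Fin n → ℕ,
          ((∀ i : Fin p, y (Fin.castLE hpn i) = x i) ∧ ∀ e ∈ T, e.Holds y) →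
          ((∀ i : Fin p, z (Fin.castLE hpn i) = x i) ∧ ∀ e ∈ T, e.Holds z) →
          y = z) := by
  have hle1 := comp_le A p
  have hle2 := comp_le B ((comp A p).1 + 1)
  obtain ⟨gA1, gA2⟩ := comp_good A p le_rfl
  obtain ⟨gB1, gB2⟩ := comp_good B ((comp A p).1 + 1) (by omega)
  refine ⟨(comp B ((comp A p).1 + 1)).1, by omega, ?_, ?_⟩
  · exact (NE.add (comp A p).2.2 (comp A p).1 (comp B ((comp A p).1 + 1)).2.2 ::
      NE.add (comp A p).1 (comp A p).1 (comp A p).1 ::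
      ((comp A p).2.1 ++ (comp B ((comp A p).1 + 1)).2.1)).filterMap
      (NE.toEqn? (comp B ((comp A p).1 + 1)).1)
  intro x
  -- global bound on variables in the ℕ-indexed system
  have hbE : ∀ e ∈ (NE.add (comp A p).2.2 (comp A p).1 (comp B ((comp A p).1 + 1)).2.2 ::
      NE.add (comp A p).1 (comp A p).1 (comp A p).1 ::
      ((comp A p).2.1 ++ (comp B ((comp A p).1 + 1)).2.1)),
      ∀ i ∈ e.vars, i < (comp B ((comp A p).1 + 1)).1 := by
    intro e he i hi
    simp only [List.mem_cons, List.mem_append] at he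
    rcases he with rfl | rfl | he | he
    · simp [NE.vars] at hi
      rcases hi with rfl | rfl | rfl
      · rcases gA2 with h | h <;> omega
      · omega
      · rcases gB2 with h | h <;> omega
    · simp [NE.vars] at hi
      rcases hi with rfl | rfl | rfl <;> omega
    · have := gA1 e he i hi; omega
    · have := gB1 e he i hi; omega
  -- the canonical extension W
  obtain ⟨y1, h1a, h1h, h1v⟩ := comp_ex A p le_rfl
    (fun i => if h : i < p then x ⟨i, h⟩ else 0)
  obtain ⟨y2, h2a, h2h, h2v⟩ := comp_ex B ((comp A p).1 + 1) (by omega)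
    (Function.update y1 (comp A p).1 0)
  -- basic facts about W := y2
  have hWlow : ∀ i < p, y2 i = (fun i => if h : i < p then x ⟨i, h⟩ else 0) i := by
    intro i hip
    rw [h2a i (by omega), Function.update_of_ne (by omega), h1a i (by omega)]
  have hWsA : y2 (comp A p).1 = 0 := by
    rw [h2a _ (by omega), Function.update_self]
  have hWrA : y2 (comp A p).2.2 = A.ev (fun i => if h : i < p then x ⟨i, h⟩ else 0) := by
    rw [h2a _ (by rcases gA2 with h | h <;> omega),
      Function.update_of_ne (by rcases gA2 with h | h <;> omega), h1v]
  have hWrB : y2 (comp B ((comp A p).1 + 1)).2.2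
      = B.ev (fun i => if h : i < p then x ⟨i, h⟩ else 0) := by
    rw [h2v]
    refine Term.ev_congr (fun i hip => ?_) B
    rw [Function.update_of_ne (by omega), h1a i (by omega)]
  have hWEA : ∀ e ∈ (comp A p).2.1, e.Holds y2 := by
    intro e he
    refine NE.holds_congr (fun v hv => ?_) (h1h e he)
    have := gA1 e he v hv
    rw [h2a v (by omega), Function.update_of_ne (by omega)]
  have hWEB : ∀ e ∈ (comp B ((comp A p).1 + 1)).2.1, e.Holds y2 := h2h
  have hWz : NE.Holds y2 (NE.add (comp A p).1 (comp A p).1 (comp A p).1) := by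
    simp [NE.Holds, hWsA]
  -- pinning: any solution extending x agrees with W below n
  have pin : ∀ Y : ℕ → ℕ, (∀ i < p, Y i = (fun i => if h : i < p then x ⟨i, h⟩ else 0) i) →
      (∀ e ∈ (NE.add (comp A p).2.2 (comp A p).1 (comp B ((comp A p).1 + 1)).2.2 ::
        NE.add (comp A p).1 (comp A p).1 (comp A p).1 ::
        ((comp A p).2.1 ++ (comp B ((comp A p).1 + 1)).2.1)), e.Holds Y) →
      ∀ i < (comp B ((comp A p).1 + 1)).1, Y i = y2 i := by
    intro Y hlow hE
    have hYEA : ∀ e ∈ (comp A p).2.1, e.Holds Y := by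
      intro e he; exact hE e (by simp [he])
    have hYEB : ∀ e ∈ (comp B ((comp A p).1 + 1)).2.1, e.Holds Y := by
      intro e he; exact hE e (by simp [he])
    have hYz := hE (NE.add (comp A p).1 (comp A p).1 (comp A p).1) (by simp)
    simp only [NE.Holds] at hYz
    have u1 : ∀ i < (comp A p).1, Y i = y2 i :=
      comp_uniq A p le_rfl Y y2
        (fun i hip => by rw [hlow i hip, hWlow i hip]) hYEA hWEA
    have u1' : ∀ i < (comp A p).1 + 1, Y i = y2 i := by
      intro i hi
      rcases Nat.lt_or_ge i (comp A p).1 with h | h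
      · exact u1 i h
      · have : i = (comp A p).1 := by omega
        rw [this, hWsA]; omega
    exact comp_uniq B ((comp A p).1 + 1) (by omega) Y y2 u1' hYEB hWEB
  constructor
  · constructor
    · -- A = B → exists solution
      intro hAB
      refine ⟨fun i => y2 i, ?_, ?_⟩
      · intro i
        have := hWlow i.1 i.isLt
        simp only at this
        rw [show (Fin.castLE (by omega : p ≤ (comp B ((comp A p).1 + 1)).1) i)
            = ⟨i.1, by omega⟩ from rfl]
        simp only [this, dif_pos i.isLt, Fin.eta]
      · rw [filterMap_toEqn? hbE (fun i => y2 i) y2 (fun i h => rfl)]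
        intro e he
        simp only [List.mem_cons, List.mem_append] at he
        rcases he with rfl | rfl | he | he
        · simp only [NE.Holds, hWrA, hWsA, hWrB, hAB, Nat.add_zero]
        · exact hWz
        · exact hWEA e he
        · exact hWEB e he
    · -- exists solution → A = B
      rintro ⟨y, hyx, hyT⟩
      have hY : ∀ e ∈ (NE.add (comp A p).2.2 (comp A p).1 (comp B ((comp A p).1 + 1)).2.2 ::
          NE.add (comp A p).1 (comp A p).1 (comp A p).1 ::
          ((comp A p).2.1 ++ (comp B ((comp A p).1 + 1)).2.1)),
          e.Holds (fun i => if h : i < (comp B ((comp A p).1 + 1)).1 then y ⟨i, h⟩ else 0) := by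
        rw [← filterMap_toEqn? hbE y _ (fun i h => by simp [h])]
        exact hyT
      have hlow : ∀ i < p,
          (fun i => if h : i < (comp B ((comp A p).1 + 1)).1 then y ⟨i, h⟩ else 0) i
            = (fun i => if h : i < p then x ⟨i, h⟩ else 0) i := by
        intro i hip
        have := hyx ⟨i, hip⟩
        simp only [dif_pos hip, dif_pos (show i < (comp B ((comp A p).1 + 1)).1 by omega)]
        rw [show Fin.castLE (by omega : p ≤ (comp B ((comp A p).1 + 1)).1) ⟨i, hip⟩
            = ⟨i, by omega⟩ from rfl] at this
        exact this
      have hpin := pin _ hlow hY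
      have hhead := hY (NE.add (comp A p).2.2 (comp A p).1
        (comp B ((comp A p).1 + 1)).2.2) (by simp)
      simp only [NE.Holds] at hhead
      rw [hpin _ (by rcases gA2 with h | h <;> omega),
          hpin _ (by omega),
          hpin _ (by rcases gB2 with h | h <;> omega),
          hWrA, hWsA, hWrB, Nat.add_zero] at hhead
      exact hhead
  · -- uniqueness
    rintro y z ⟨hyx, hyT⟩ ⟨hzx, hzT⟩
    have hY : ∀ e ∈ (NE.add (comp A p).2.2 (comp A p).1 (comp B ((comp A p).1 + 1)).2.2 ::
        NE.add (comp A p).1 (comp A p).1 (comp A p).1 ::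
        ((comp A p).2.1 ++ (comp B ((comp A p).1 + 1)).2.1)),
        e.Holds (fun i => if h : i < (comp B ((comp A p).1 + 1)).1 then y ⟨i, h⟩ else 0) := by
      rw [← filterMap_toEqn? hbE y _ (fun i h => by simp [h])]
      exact hyT
    have hZ : ∀ e ∈ (NE.add (comp A p).2.2 (comp A p).1 (comp B ((comp A p).1 + 1)).2.2 ::
        NE.add (comp A p).1 (comp A p).1 (comp A p).1 ::
        ((comp A p).2.1 ++ (comp B ((comp A p).1 + 1)).2.1)),
        e.Holds (fun i => if h : i < (comp B ((comp A p).1 + 1)).1 then z ⟨i, h⟩ else 0) := by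
      rw [← filterMap_toEqn? hbE z _ (fun i h => by simp [h])]
      exact hzT
    have hlowy : ∀ i < p,
        (fun i => if h : i < (comp B ((comp A p).1 + 1)).1 then y ⟨i, h⟩ else 0) i
          = (fun i => if h : i < p then x ⟨i, h⟩ else 0) i := by
      intro i hip
      have := hyx ⟨i, hip⟩
      simp only [dif_pos hip, dif_pos (show i < (comp B ((comp A p).1 + 1)).1 by omega)]
      rw [show Fin.castLE (by omega : p ≤ (comp B ((comp A p).1 + 1)).1) ⟨i, hip⟩
          = ⟨i, by omega⟩ from rfl] at this
      exact this
    have hlowz : ∀ i < p,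
        (fun i => if h : i < (comp B ((comp A p).1 + 1)).1 then z ⟨i, h⟩ else 0) i
          = (fun i => if h : i < p then x ⟨i, h⟩ else 0) i := by
      intro i hip
      have := hzx ⟨i, hip⟩
      simp only [dif_pos hip, dif_pos (show i < (comp B ((comp A p).1 + 1)).1 by omega)]
      rw [show Fin.castLE (by omega : p ≤ (comp B ((comp A p).1 + 1)).1) ⟨i, hip⟩
          = ⟨i, by omega⟩ from rfl] at this
      exact this
    have hpy := pin _ hlowy hY
    have hpz := pin _ hlowz hZ
    funext i
    have h1 := hpy i.1 i.isLt
    have h2 := hpz i.1 i.isLt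
    simp only [dif_pos i.isLt, Fin.eta] at h1 h2
    rw [h1] at *
    rw [← h2]

theorem stmt_10 (p : ℕ) (D : MvPolynomial (Fin p) ℤ) :
    ∃ (n : ℕ) (hpn : p ≤ n) (T : List (Eqn n)),
      ∀ x : Fin p → ℕ,
        (MvPolynomial.aeval (fun i => (x i : ℤ)) D = 0 ↔
          ∃ y : Fin n → ℕ, (∀ i : Fin p, y (Fin.castLE hpn i) = x i) ∧
            ∀ e ∈ T, e.Holds y) ∧
        (MvPolynomial.aeval (fun i => (x i : ℤ)) D = 0 →
          ∀ y z : Fin n → ℕ,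
            ((∀ i : Fin p, y (Fin.castLE hpn i) = x i) ∧ ∀ e ∈ T, e.Holds y) →
            ((∀ i : Fin p, z (Fin.castLE hpn i) = x i) ∧ ∀ e ∈ T, e.Holds z) →
            y = z) := by
  obtain ⟨A, B, hAB⟩ := exists_AB D
  obtain ⟨n, hpn, T, hT⟩ := main_aux A B
  refine ⟨n, hpn, T, fun x => ?_⟩
  obtain ⟨h1, h2⟩ := hT x
  have key : MvPolynomial.aeval (fun i => (x i : ℤ)) D = 0 ↔
      A.ev (fun i => if h : i < p then x ⟨i, h⟩ else 0)
        = B.ev (fun i => if h : i < p then x ⟨i, h⟩ else 0) := by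
    have hspec := hAB (fun i => if h : i < p then x ⟨i, h⟩ else 0)
    have hfun : (fun i : Fin p =>
        (((fun j => if h : j < p then x ⟨j, h⟩ else 0) (i : ℕ) : ℕ) : ℤ))
          = fun i : Fin p => (x i : ℤ) := by
      funext i
      simp [i.isLt]
    rw [hfun] at hspec
    rw [hspec]
    omega
  exact ⟨key.trans h1, fun _ => h2⟩
end

section
/- Suppose Ψ(x_1, x_2, x_3, ..., x_s) is a conjunction of equations of the forms x_i = 1, x_i + x_j = x_k, x_i · x_j = x_k such that for all integers x_1, x_2: (x_2 ≥ 0 and x_1 = f(x_2)) if and only if there exist integers x_3,...,x_s with Ψ(x_1,...,x_s), for some function f : ℕ → ℕ. Then for every integer n ≥ 4 + 2s there is a system S ⊆ E_n in n variables such that S has an integer solution, and every integer solution (x_1,...,x_n) of S satisfies x_1 = f(n). -/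
/-!
Place Ψ on the first `s` variables. On fresh variables, the chain `t₁ = 1`,
`t_{i+1} = t_i + t₁` produces `⌊n/2⌋`, doubling it and adding `n % 2` (pinned down by
`y + y = y` or `y = 1`) forces `x₂ = n`, and then Ψ forces `x₁ = f n`. This uses
`s + ⌊n/2⌋ + 2` variables, which fits in `n` once `n ≥ 4 + 2s`.
-/

variable {K : Type*} [CommSemiring K]

namespace Eqn

def map {m n : ℕ} (σ : Fin m → Fin n) : Eqn m → Eqn n
  | .one i => .one (σ i)
  | .add i j k => .add (σ i) (σ j) (σ k)
  | .mul i j k => .mul (σ i) (σ j) (σ k)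

@[simp]
theorem holds_map {m n : ℕ} (σ : Fin m → Fin n) (x : Fin n → K) (e : Eqn m) :
    (e.map σ).Holds x ↔ e.Holds (x ∘ σ) := by
  cases e <;> rfl

end Eqn

def countingChain {n m : ℕ} (t : Fin (m + 1) → Fin n) : List (Eqn n) :=
  .one (t 0) :: (List.finRange m).map fun i => .add (t i.castSucc) (t 0) (t i.succ)

theorem holds_countingChain_iff {n m : ℕ} (t : Fin (m + 1) → Fin n) (x : Fin n → K) :
    (∀ e ∈ countingChain t, e.Holds x) ↔ ∀ i, x (t i) = (i : ℕ) + 1 := by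
  simp only [countingChain, List.forall_mem_cons, List.forall_mem_map, List.mem_finRange,
    forall_const, Eqn.Holds]
  constructor
  · rintro ⟨h0, hsucc⟩ i
    induction i using Fin.induction with
    | zero => simpa using h0
    | succ i ih => rw [← hsucc, ih, h0]; simp
  · intro h
    exact ⟨by simpa using h 0, fun i => by simp [h]⟩

def parityEqn {n : ℕ} (y : Fin n) (k : ℕ) : Eqn n :=
  if Even k then .add y y y else .one y

theorem holds_parityEqn_iff [IsCancelAdd K] {n : ℕ} (y : Fin n) (k : ℕ) (x : Fin n → K) :
    (parityEqn y k).Holds x ↔ x y = (k % 2 : ℕ) := by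
  unfold parityEqn
  split_ifs with hk
  · simp [Eqn.Holds, Nat.even_iff.mp hk]
  · simp [Eqn.Holds, Nat.odd_iff.mp (Nat.not_even_iff_odd.mp hk)]

def numeralSystem {n m : ℕ} (t : Fin (m + 1) → Fin n) (w y target : Fin n) (k : ℕ) :
    List (Eqn n) :=
  countingChain t ++ [.add (t (Fin.last m)) (t (Fin.last m)) w, .add w y target, parityEqn y k]

theorem holds_numeralSystem_iff [IsCancelAdd K] {n m k : ℕ} (hk : k / 2 = m + 1)
    (t : Fin (m + 1) → Fin n) (w y target : Fin n) (x : Fin n → K) :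
    (∀ e ∈ numeralSystem t w y target k, e.Holds x) ↔
      (∀ i, x (t i) = (i : ℕ) + 1) ∧ x w = (2 * (m + 1) : ℕ) ∧ x y = (k % 2 : ℕ) ∧
        x target = k := by
  have hdiv : (k : K) = 2 * (m + 1) + (k % 2 : ℕ) := by
    rw [← Nat.cast_ofNat, ← Nat.cast_succ, ← Nat.cast_mul, ← Nat.cast_add]
    congr 1
    omega
  simp only [numeralSystem, List.forall_mem_append, holds_countingChain_iff,
    List.forall_mem_cons, List.not_mem_nil, IsEmpty.forall_iff, implies_true,
    holds_parityEqn_iff, and_true]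
  simp only [Eqn.Holds]
  constructor
  · rintro ⟨ht, hw, htarget, hy⟩
    rw [ht, Fin.val_last] at hw
    refine ⟨ht, ?_, hy, ?_⟩
    · rw [← hw]; push_cast; ring
    · rw [← htarget, ← hw, hy, hdiv]; ring
  · rintro ⟨ht, hw, hy, htarget⟩
    refine ⟨ht, ?_, ?_, hy⟩
    · rw [ht, hw, Fin.val_last]; push_cast; ring
    · rw [hw, hy, htarget, hdiv]; push_cast; ring

section Pinning

variable {s n : ℕ} (Ψ : List (Eqn s)) (k : ℕ) (h : s + k / 2 + 2 ≤ n) (hs : 1 < s)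

def pinnedSystem : List (Eqn n) :=
  Ψ.map (Eqn.map (Fin.castLE (by omega))) ++
    numeralSystem (m := k / 2 - 1) (fun i => ⟨s + i, by omega⟩) ⟨s + k / 2, by omega⟩
      ⟨s + k / 2 + 1, by omega⟩ ⟨1, by omega⟩ k

theorem pinnedSystem_forces [IsCancelAdd K] (hk : 2 ≤ k) {x : Fin n → K}
    (hx : ∀ e ∈ pinnedSystem Ψ k h hs, e.Holds x) :
    (∀ e ∈ Ψ, e.Holds (x ∘ Fin.castLE (by omega))) ∧ x ⟨1, by omega⟩ = k := by
  simp only [pinnedSystem, List.forall_mem_append, List.forall_mem_map, Eqn.holds_map,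
    holds_numeralSystem_iff (show k / 2 = k / 2 - 1 + 1 by omega)] at hx
  exact ⟨hx.1, hx.2.2.2.2⟩

theorem exists_holds_pinnedSystem [IsCancelAdd K] (hk : 2 ≤ k) (y : Fin s → K)
    (hy : ∀ e ∈ Ψ, e.Holds y) (hy1 : y ⟨1, hs⟩ = k) : ∃ x : Fin n → K, ∀ e ∈ pinnedSystem Ψ k h hs, e.Holds x := by
  let x : Fin n → K := fun j =>
    if hj : j.1 < s then y ⟨j, hj⟩
    else if j.1 < s + k / 2 then ((j.1 - s + 1 : ℕ) : K)
    else if j.1 = s + k / 2 then ((2 * (k / 2) : ℕ) : K)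
    else ((k % 2 : ℕ) : K)
  have hxy : x ∘ Fin.castLE (by omega) = y := funext fun i => dif_pos i.2
  refine ⟨x, ?_⟩
  simp only [pinnedSystem, List.forall_mem_append, List.forall_mem_map, Eqn.holds_map, hxy,
    holds_numeralSystem_iff (show k / 2 = k / 2 - 1 + 1 by omega)]
  refine ⟨hy, fun i => ?_, ?_, ?_, ?_⟩
  · simp only [x]
    rw [dif_neg (by omega), if_pos (by omega)]
    simp
  · simp only [x]
    rw [dif_neg (by omega), if_neg (by omega), if_pos trivial, Nat.sub_add_cancel (by omega)]
  · simp only [x]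
    rw [dif_neg (by omega), if_neg (by omega), if_neg (by omega)]
  · simp only [x]
    rw [dif_pos hs, hy1]

end Pinning

theorem stmt_11 (s : ℕ) (hs : 2 ≤ s) (f : ℕ → ℕ) (Ψ : List (Eqn s))
    (hΨ : ∀ x1 x2 : ℤ, (0 ≤ x2 ∧ x1 = (f x2.toNat : ℤ)) ↔
      ∃ y : Fin s → ℤ, y ⟨0, by omega⟩ = x1 ∧ y ⟨1, by omega⟩ = x2 ∧
        ∀ e ∈ Ψ, e.Holds y)
    (n : ℕ) (hn : 4 + 2 * s ≤ n) :
    ∃ S : List (Eqn n),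
      (∃ x : Fin n → ℤ, ∀ e ∈ S, e.Holds x) ∧
      ∀ x : Fin n → ℤ, (∀ e ∈ S, e.Holds x) → x ⟨0, by omega⟩ = (f n : ℤ) := by
  have h : s + n / 2 + 2 ≤ n := by omega
  obtain ⟨y, -, hy1, hyΨ⟩ := (hΨ (f n) n).mp ⟨by positivity, by simp⟩
  refine ⟨pinnedSystem Ψ n h hs, exists_holds_pinnedSystem Ψ n h hs (by omega) y hyΨ hy1,
    fun x hx => ?_⟩
  obtain ⟨hxΨ, hx1⟩ := pinnedSystem_forces Ψ n h hs (by omega) hx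
  simpa using ((hΨ _ n).mpr ⟨_, rfl, hx1, hxΨ⟩).2
end
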